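/- Let R be a commutative ring, m ∈ R, n ≥ 2, and let a^{(e)}_{i,j} denote the (i,j) entry of T_n(m)^e. Then for every e ≥ 1 and all 2 ≤ i, j ≤ n: U_{e-1}·a^{(e)}_{i,j} + U_e·a^{(e)}_{i,j-1} = U_e·a^{(e)}_{i-1,j} + U_{e+1}·a^{(e)}_{i-1,j-1}. -/
import Mathlib


/-- The generalized Fibonacci sequence with parameter `m`:
`U_0 = 0`, `U_1 = 1`, `U_{e+1} = m U_e + U_{e-1}`. -/
def genFibU {R : Type*} [CommRing R] (m : R) : ℕ → R
  | 0 => 0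
  | 1 => 1
  | e + 2 => m * genFibU m (e + 1) + genFibU m e

/-- The `n × n` generalized Fibonacci matrix `T_n(m)`, with 1-based `(i,j)` entry
`m^{i+j-n-1} C(i-1, n-j)` when `i + j ≥ n + 1` and `0` otherwise. -/
def genFibMatrix {R : Type*} [CommRing R] (m : R) (n : ℕ) :
    Matrix (Fin n) (Fin n) R :=
  Matrix.of fun i j =>
    if n ≤ i.val + j.val + 1 then
      m ^ (i.val + j.val + 1 - n) * (Nat.choose i.val (n - 1 - j.val) : R)
    else 0

section Aux

variable {R : Type*} [CommRing R]

/-- Entries of `T_n(m)^e` as a ℕ-indexed function (zero out of range). -/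
def gfAent (m : R) (n e i j : ℕ) : R :=
  if h : i < n ∧ j < n then ((genFibMatrix m n) ^ e) ⟨i, h.1⟩ ⟨j, h.2⟩ else 0

lemma gfAent_eq (m : R) (n e i j : ℕ) (hi : i < n) (hj : j < n) :
    ((genFibMatrix m n) ^ e) ⟨i, hi⟩ ⟨j, hj⟩ = gfAent m n e i j := by
  rw [gfAent, dif_pos (⟨hi, hj⟩ : i < n ∧ j < n)]

lemma gfAent_one (m : R) (n i j : ℕ) (hi : i < n) (hj : j < n) :
    gfAent m n 1 i j = m ^ (i + j + 1 - n) * (Nat.choose i (n - 1 - j) : R) := by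
  rw [gfAent, dif_pos (⟨hi, hj⟩ : i < n ∧ j < n), pow_one, genFibMatrix, Matrix.of_apply]
  simp only [Fin.val_mk]
  split_ifs with h
  · rfl
  · have hc : Nat.choose i (n - 1 - j) = 0 := Nat.choose_eq_zero_of_lt (by omega)
    rw [hc]; simp

lemma gfAent_succR (m : R) (n e i j : ℕ) (hi : i < n) (hj : j < n) :
    gfAent m n (e + 1) i j
      = ∑ k ∈ Finset.range n, gfAent m n e i k * gfAent m n 1 k j := by
  rw [gfAent, dif_pos (⟨hi, hj⟩ : i < n ∧ j < n), pow_succ, Matrix.mul_apply]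
  rw [← Fin.sum_univ_eq_sum_range (fun k => gfAent m n e i k * gfAent m n 1 k j) n]
  refine Finset.sum_congr rfl fun k _ => ?_
  rw [← gfAent_eq m n e i k.val hi k.isLt, ← gfAent_eq m n 1 k.val j k.isLt hj, pow_one]

lemma gfAent_succL (m : R) (n e i j : ℕ) (hi : i < n) (hj : j < n) :
    gfAent m n (e + 1) i j
      = ∑ k ∈ Finset.range n, gfAent m n 1 i k * gfAent m n e k j := by
  rw [gfAent, dif_pos (⟨hi, hj⟩ : i < n ∧ j < n), pow_succ', Matrix.mul_apply]
  rw [← Fin.sum_univ_eq_sum_range (fun k => gfAent m n 1 i k * gfAent m n e k j) n]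
  refine Finset.sum_congr rfl fun k _ => ?_
  rw [← gfAent_eq m n 1 i k.val hi k.isLt, ← gfAent_eq m n e k.val j k.isLt hj, pow_one]

/-- Pascal-style relation for the entries of `T_n(m)` itself. -/
lemma gfPascal (m : R) (n i j : ℕ) (hi1 : 1 ≤ i) (hin : i < n) (hj1 : 1 ≤ j) (hjn : j < n) :
    gfAent m n 1 i (j - 1)
      = gfAent m n 1 (i - 1) j + m * gfAent m n 1 (i - 1) (j - 1) := by
  obtain ⟨i, rfl⟩ : ∃ i', i = i' + 1 := ⟨i - 1, by omega⟩
  obtain ⟨j, rfl⟩ : ∃ j', j = j' + 1 := ⟨j - 1, by omega⟩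
  simp only [Nat.add_sub_cancel]
  rw [gfAent_one m n (i + 1) j (by omega) (by omega),
      gfAent_one m n i (j + 1) (by omega) (by omega),
      gfAent_one m n i j (by omega) (by omega)]
  rcases lt_trichotomy (i + j + 2) n with h | h | h
  · rw [Nat.choose_eq_zero_of_lt (show i + 1 < n - 1 - j by omega),
        Nat.choose_eq_zero_of_lt (show i < n - 1 - (j + 1) by omega),
        Nat.choose_eq_zero_of_lt (show i < n - 1 - j by omega)]
    push_cast; ring
  · rw [show i + 1 + j + 1 - n = 0 from by omega,
        show i + (j + 1) + 1 - n = 0 from by omega,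
        show i + j + 1 - n = 0 from by omega,
        show n - 1 - (j + 1) = i from by omega,
        show n - 1 - j = i + 1 from by omega,
        Nat.choose_self, Nat.choose_self, Nat.choose_succ_self]
    push_cast; ring
  · rw [show n - 1 - (j + 1) = n - 2 - j from by omega,
        show n - 1 - j = (n - 2 - j) + 1 from by omega,
        Nat.choose_succ_succ,
        show i + 1 + j + 1 - n = i + j + 2 - n from by omega,
        show i + (j + 1) + 1 - n = i + j + 2 - n from by omega,
        show i + j + 2 - n = (i + j + 1 - n) + 1 from by omega, pow_succ]
    push_cast; ring

/-- Closed form for the last column of `T_n(m)^e`. -/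
lemma gfLastCol (m : R) (n : ℕ) (hn : 2 ≤ n) :
    ∀ e, 1 ≤ e → ∀ i, i < n →
      gfAent m n e i (n - 1)
        = (genFibU m (e + 1)) ^ i * (genFibU m e) ^ (n - 1 - i) := by
  intro e he
  induction e, he using Nat.le_induction with
  | base =>
    intro i hi
    rw [gfAent_one m n i (n - 1) hi (by omega),
        show i + (n - 1) + 1 - n = i from by omega,
        show n - 1 - (n - 1) = 0 from by omega, Nat.choose_zero_right]
    simp [genFibU]
  | succ e he ih =>
    intro i hi
    rw [gfAent_succL m n e i (n - 1) hi (by omega)]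
    have step1 : ∑ k ∈ Finset.range n, gfAent m n 1 i k * gfAent m n e k (n - 1)
        = ∑ k ∈ Finset.range n,
            m ^ (i + k + 1 - n) * (Nat.choose i (n - 1 - k) : R)
              * (genFibU m (e + 1) ^ k * genFibU m e ^ (n - 1 - k)) := by
      refine Finset.sum_congr rfl fun k hk => ?_
      rw [gfAent_one m n i k hi (Finset.mem_range.mp hk),
          ih k (Finset.mem_range.mp hk)]
    rw [step1]
    rw [← Finset.sum_range_reflect (fun k =>
          m ^ (i + k + 1 - n) * (Nat.choose i (n - 1 - k) : R)
            * (genFibU m (e + 1) ^ k * genFibU m e ^ (n - 1 - k))) n]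
    have step2 : ∑ l ∈ Finset.range n,
          m ^ (i + (n - 1 - l) + 1 - n) * (Nat.choose i (n - 1 - (n - 1 - l)) : R)
            * (genFibU m (e + 1) ^ (n - 1 - l) * genFibU m e ^ (n - 1 - (n - 1 - l)))
        = ∑ l ∈ Finset.range n,
          (Nat.choose i l : R)
            * (m ^ (i - l) * (genFibU m (e + 1) ^ (n - 1 - l) * genFibU m e ^ l)) := by
      refine Finset.sum_congr rfl fun l hl => ?_
      have hl' : l < n := Finset.mem_range.mp hl
      rw [show n - 1 - (n - 1 - l) = l from by omega,
          show i + (n - 1 - l) + 1 - n = i - l from by omega]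
      ring
    rw [step2]
    have step3 : ∑ l ∈ Finset.range n,
          (Nat.choose i l : R)
            * (m ^ (i - l) * (genFibU m (e + 1) ^ (n - 1 - l) * genFibU m e ^ l))
        = ∑ l ∈ Finset.range (i + 1),
          (Nat.choose i l : R)
            * (m ^ (i - l) * (genFibU m (e + 1) ^ (n - 1 - l) * genFibU m e ^ l)) := by
      refine (Finset.sum_subset (Finset.range_subset_range.mpr (by omega)) fun l _ hl => ?_).symm
      have : i < l := by
        simp only [Finset.mem_range] at hl; omega
      rw [Nat.choose_eq_zero_of_lt this]; simp
    rw [step3]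
    have step4 : ∑ l ∈ Finset.range (i + 1),
          (Nat.choose i l : R)
            * (m ^ (i - l) * (genFibU m (e + 1) ^ (n - 1 - l) * genFibU m e ^ l))
        = (genFibU m e + m * genFibU m (e + 1)) ^ i * genFibU m (e + 1) ^ (n - 1 - i) := by
      rw [add_pow, Finset.sum_mul]
      refine Finset.sum_congr rfl fun l hl => ?_
      have hli : l ≤ i := by
        simp only [Finset.mem_range] at hl; omega
      rw [show n - 1 - l = (i - l) + (n - 1 - i) from by omega, pow_add, mul_pow]
      ring
    rw [step4, show genFibU m (e + 1 + 1) = m * genFibU m (e + 1) + genFibU m e from rfl]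
    ring

/-- Telescoping partial sums in the inductive step. -/
lemma gfTelescope (m : R) (n : ℕ) (hn : 2 ≤ n) (e : ℕ) (he : 1 ≤ e)
    (ihP : ∀ i j, 1 ≤ i → i < n → 1 ≤ j → j < n →
      genFibU m (e - 1) * gfAent m n e i j + genFibU m e * gfAent m n e i (j - 1)
        = genFibU m e * gfAent m n e (i - 1) j
            + genFibU m (e + 1) * gfAent m n e (i - 1) (j - 1))
    (i j : ℕ) (hi1 : 1 ≤ i) (hin : i < n) (hj1 : 1 ≤ j) (hjn : j < n) :
    ∀ N, 1 ≤ N → N ≤ n →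
      ∑ k ∈ Finset.range N,
        (gfAent m n e i k
            * (genFibU m e * gfAent m n 1 k j + genFibU m (e + 1) * gfAent m n 1 k (j - 1))
          - gfAent m n e (i - 1) k
            * (genFibU m (e + 1) * gfAent m n 1 k j
                + genFibU m (e + 2) * gfAent m n 1 k (j - 1)))
      = (gfAent m n 1 (N - 1) j + m * gfAent m n 1 (N - 1) (j - 1))
          * (genFibU m e * gfAent m n e i (N - 1)
              - genFibU m (e + 1) * gfAent m n e (i - 1) (N - 1)) := by
  intro N hN
  induction N, hN using Nat.le_induction with
  | base =>
    intro _
    rw [Finset.sum_range_one]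
    simp only [Nat.sub_self]
    have hr0 : gfAent m n 1 0 (j - 1) = 0 := by
      rw [gfAent_one m n 0 (j - 1) (by omega) (by omega),
          Nat.choose_eq_zero_of_lt (show 0 < n - 1 - (j - 1) by omega)]
      simp
    rw [hr0]; ring
  | succ N hN ihN =>
    intro hNn
    rw [Finset.sum_range_succ, ihN (by omega), Nat.add_sub_cancel]
    have hrec : gfAent m n 1 N (j - 1)
        = gfAent m n 1 (N - 1) j + m * gfAent m n 1 (N - 1) (j - 1) :=
      gfPascal m n N j hN (by omega) hj1 hjn
    have hP := ihP i N hi1 hin hN (by omega)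
    have hU1 : genFibU m (e + 1) = m * genFibU m e + genFibU m (e - 1) := by
      obtain ⟨e, rfl⟩ : ∃ e', e = e' + 1 := ⟨e - 1, by omega⟩
      simp only [Nat.add_sub_cancel]
      rfl
    have hU2 : genFibU m (e + 2) = m * genFibU m (e + 1) + genFibU m e := rfl
    rw [hU1] at hP
    rw [hU2, hU1, hrec]
    linear_combination
      (gfAent m n 1 (N - 1) j + m * gfAent m n 1 (N - 1) (j - 1)) * hP

/-- The netted relation for `T_n(m)^e` in ℕ-indexed form (0-based indices). -/
lemma gfMain (m : R) (n : ℕ) (hn : 2 ≤ n) :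
    ∀ e, 1 ≤ e → ∀ i j, 1 ≤ i → i < n → 1 ≤ j → j < n →
      genFibU m (e - 1) * gfAent m n e i j + genFibU m e * gfAent m n e i (j - 1)
        = genFibU m e * gfAent m n e (i - 1) j
            + genFibU m (e + 1) * gfAent m n e (i - 1) (j - 1) := by
  intro e he
  induction e, he using Nat.le_induction with
  | base =>
    intro i j hi1 hin hj1 hjn
    have hp := gfPascal m n i j hi1 hin hj1 hjn
    rw [show (1 : ℕ) - 1 = 0 from rfl,
        show genFibU m 0 = (0 : R) from rfl,
        show genFibU m 1 = (1 : R) from rfl,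
        show genFibU m 2 = m * 1 + 0 from rfl]
    linear_combination hp
  | succ e he ih =>
    intro i j hi1 hin hj1 hjn
    have htel := gfTelescope m n hn e he ih i j hi1 hin hj1 hjn n (by omega) le_rfl
    obtain ⟨i, rfl⟩ : ∃ i', i = i' + 1 := ⟨i - 1, by omega⟩
    simp only [Nat.add_sub_cancel] at htel ⊢
    have hx := gfLastCol m n hn e he (i + 1) hin
    have hy := gfLastCol m n hn e he i (by omega)
    have hzero : genFibU m e * gfAent m n e (i + 1) (n - 1)
        - genFibU m (e + 1) * gfAent m n e i (n - 1) = 0 := by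
      rw [hx, hy, show n - 1 - i = (n - 1 - (i + 1)) + 1 from by omega,
          pow_succ, pow_succ]
      ring
    rw [hzero, mul_zero] at htel
    rw [gfAent_succR m n e (i + 1) j hin hjn,
        gfAent_succR m n e (i + 1) (j - 1) hin (by omega),
        gfAent_succR m n e i j (by omega) hjn,
        gfAent_succR m n e i (j - 1) (by omega) (by omega)]
    rw [show e + 1 + 1 = e + 2 from rfl]
    rw [← sub_eq_zero, Finset.mul_sum, Finset.mul_sum, Finset.mul_sum, Finset.mul_sum,
        ← Finset.sum_add_distrib, ← Finset.sum_add_distrib, ← Finset.sum_sub_distrib]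
    refine Eq.trans (Finset.sum_congr rfl fun k _ => ?_) htel
    ring

end Aux

/-- The entries `a^{(e)}_{i,j}` of `T_n(m)^e` (1-based indices) satisfy
`U_{e-1} a^{(e)}_{i,j} + U_e a^{(e)}_{i,j-1} = U_e a^{(e)}_{i-1,j} + U_{e+1} a^{(e)}_{i-1,j-1}`
for `2 ≤ i, j ≤ n`. -/
theorem genFibMatrix_pow_netted {R : Type*} [CommRing R] (m : R) (n : ℕ) (hn : 2 ≤ n) :
    ∀ e : ℕ, 1 ≤ e → ∀ i j : ℕ, ∀ (hi2 : 2 ≤ i) (hin : i ≤ n) (hj2 : 2 ≤ j) (hjn : j ≤ n),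
      genFibU m (e - 1) * ((genFibMatrix m n) ^ e) ⟨i - 1, by omega⟩ ⟨j - 1, by omega⟩ +
        genFibU m e * ((genFibMatrix m n) ^ e) ⟨i - 1, by omega⟩ ⟨j - 2, by omega⟩ =
      genFibU m e * ((genFibMatrix m n) ^ e) ⟨i - 2, by omega⟩ ⟨j - 1, by omega⟩ +
        genFibU m (e + 1) * ((genFibMatrix m n) ^ e) ⟨i - 2, by omega⟩ ⟨j - 2, by omega⟩ := by
  intro e he i j hi2 hin hj2 hjn
  have h := gfMain m n hn e he (i - 1) (j - 1) (by omega) (by omega) (by omega) (by omega)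
  rw [show i - 1 - 1 = i - 2 from by omega, show j - 1 - 1 = j - 2 from by omega] at h
  rw [gfAent_eq m n e (i - 1) (j - 1) (by omega) (by omega),
      gfAent_eq m n e (i - 1) (j - 2) (by omega) (by omega),
      gfAent_eq m n e (i - 2) (j - 1) (by omega) (by omega),
      gfAent_eq m n e (i - 2) (j - 2) (by omega) (by omega)]
  exact h
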